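/- Let Λ ⊂ 𝔻 satisfy: for every ψ ∈ ℱ and every ζ ∈ 𝕋, ∑_{λ ∈ Λ ∩ Γ_ψ(ζ)} (1−|λ|) = ∞. Let M_{n,k} = #(Λ ∩ Q_{n,k}) and assume there exist C > 0 and positive integers M_n such that C^{−1} M_n ≤ M_{n,k} ≤ C M_n for all n and all 0 ≤ k ≤ 2ⁿ−1. Then ∑_n (M_n 2^{−n})^{1/2} = ∞. -/

import Mathlib

open Complex Metric Set MeasureTheory Filter Topology

noncomputable section

/-- The open unit disk in the complex plane. -/
def unitDisk : Set ℂ := Metric.ball 0 1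

/-- `log⁺ x = log (max 1 x)`. -/
def logPlus (x : ℝ) : ℝ := Real.log (max 1 x)

/-- `h` is a positive harmonic function on `S`: on a simply connected domain,
harmonic functions are exactly the real parts of holomorphic functions. -/
def PosHarmOn (S : Set ℂ) (h : ℂ → ℝ) : Prop :=
  (∃ g : ℂ → ℂ, DifferentiableOn ℂ g S ∧ ∀ z ∈ S, h z = (g z).re) ∧
  ∀ z ∈ S, 0 < h z

/-- The Nevanlinna class: holomorphic functions on the unit disk with uniformly
bounded integral means of `log⁺|f|`. -/
def NevClass (f : ℂ → ℂ) : Prop :=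
  DifferentiableOn ℂ f unitDisk ∧
  ∃ M : ℝ, ∀ r ∈ Set.Ioo (0:ℝ) 1,
    (1/(2*Real.pi)) * ∫ θ in (0:ℝ)..(2*Real.pi),
      logPlus (norm (f ((r:ℂ) * Complex.exp ((θ:ℂ) * Complex.I)))) ≤ M

/-- `N(f|Λ)`: infimum of `h(0)` over positive harmonic majorants of `log(1+|f|)` on `Λ`. -/
def NRestrict (f : ℂ → ℂ) (Λ : Set ℂ) : ℝ :=
  sInf {c | ∃ h : ℂ → ℝ, PosHarmOn unitDisk h ∧
    (∀ z ∈ Λ, Real.log (1 + norm (f z)) ≤ h z) ∧ c = h 0}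

/-- `N(f)`. -/
def NFull (f : ℂ → ℂ) : ℝ := NRestrict f unitDisk

/-- `N₊(f|Λ)`. -/
def NplusRestrict (f : ℂ → ℂ) (Λ : Set ℂ) : ℝ :=
  sInf {c | ∃ h : ℂ → ℝ, PosHarmOn unitDisk h ∧
    (∀ z ∈ Λ, logPlus (norm (f z)) ≤ h z) ∧ c = h 0}

/-- `N₊(f)`. -/
def NplusFull (f : ℂ → ℂ) : ℝ := NplusRestrict f unitDisk

/-- `Λ` is a sampling set for the Nevanlinna class. -/
def SamplingNev (Λ : Set ℂ) : Prop :=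
  ∃ C : ℝ, 0 < C ∧ ∀ f : ℂ → ℂ, NevClass f → NFull f ≤ NRestrict f Λ + C

/-- `Λ` is a determination set for the Nevanlinna class. -/
def DeterminationNev (Λ : Set ℂ) : Prop :=
  ∀ f : ℂ → ℂ, NevClass f → (∃ M : ℝ, ∀ z ∈ Λ, norm (f z) ≤ M) →
    ∃ M : ℝ, ∀ z ∈ unitDisk, norm (f z) ≤ M

/-- `Λ` is a strongly sampling set for the Nevanlinna class. -/
def StrongSamplingNev (Λ : Set ℂ) : Prop :=
  ∀ f : ℂ → ℂ, ∀ h : ℂ → ℝ, NevClass f → PosHarmOn unitDisk h →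
    (∀ z ∈ Λ, logPlus (norm (f z)) ≤ h z) →
    ∀ z ∈ unitDisk, logPlus (norm (f z)) ≤ h z

/-- Pseudohyperbolic distance. -/
def pdist (z w : ℂ) : ℝ :=
  norm (z - w) / norm (1 - (starRingEnd ℂ z) * w)

/-- Pseudohyperbolic disk. -/
def pBall (z : ℂ) (r : ℝ) : Set ℂ := {w ∈ unitDisk | pdist z w < r}

/-- Pseudohyperbolic dilation `E^δ`. -/
def pDilate (E : Set ℂ) (δ : ℝ) : Set ℂ := ⋃ z ∈ E, pBall z δ

/-- Hayman–Lyons set. -/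
def HaymanLyons (E : Set ℂ) : Prop :=
  ∃ δ ∈ Set.Ioo (0:ℝ) 1, ∀ ζ : ℂ, norm ζ = 1 →
    ∫⁻ z in pDilate E δ, ENNReal.ofReal (1 / norm (ζ - z) ^ 2) = ⊤

/-- Dyadic (Whitney) squares `Q_{n,k}`. -/
def dSquare (n k : ℕ) : Set ℂ :=
  {z | ∃ r θ : ℝ, 1 - (2:ℝ)^(-(n:ℤ)) ≤ r ∧ r < 1 - (2:ℝ)^(-(n:ℤ)-1) ∧
    2*Real.pi*k * (2:ℝ)^(-(n:ℤ)) ≤ θ ∧ θ < 2*Real.pi*(k+1) * (2:ℝ)^(-(n:ℤ)) ∧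
    z = (r:ℂ) * Complex.exp ((θ:ℂ) * Complex.I)}

/-- Center of the dyadic square `Q_{n,k}`. -/
def dCenter (n k : ℕ) : ℂ :=
  ((1 - (3/4) * (2:ℝ)^(-(n:ℤ)) : ℝ) : ℂ) *
    Complex.exp (((2*Real.pi*(k + 1/2) * (2:ℝ)^(-(n:ℤ)) : ℝ) : ℂ) * Complex.I)

/-- `Q̃_{n,k}`: union of the dyadic squares whose closure meets the closure of `Q_{n,k}`. -/
def dTilde (n k : ℕ) : Set ℂ :=
  ⋃ (m : ℕ) (j : ℕ) (_ : j < 2^m)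
    (_ : (closure (dSquare m j) ∩ closure (dSquare n k)).Nonempty), dSquare m j

/-- The vulnerability `w_{n,k}(Λ,N)`. -/
def vul (δ : ℝ) (Λ : Set ℂ) (n k N : ℕ) : ℝ :=
  sSup {t | ∃ a : Fin N → ℂ, (∀ j, a j ∈ pDilate (closure (dSquare n k)) δ) ∧
    t = sInf {s | ∃ lam ∈ Λ ∩ closure (dSquare n k),
      s = ∑ j, Real.log (1 / pdist lam (a j))}}

/-- Poisson kernel `P_z(e^{iθ})`. -/
def poissonKer (z : ℂ) (θ : ℝ) : ℝ :=
  (1 - norm z ^ 2) / norm (Complex.exp ((θ:ℂ) * Complex.I) - z) ^ 2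

/-- Poisson integral of a boundary function (in the angle variable). -/
def poissonIntegral (w : ℝ → ℝ) (z : ℂ) : ℝ :=
  (1/(2*Real.pi)) * ∫ θ in (0:ℝ)..(2*Real.pi), poissonKer z θ * w θ

/-- Blaschke factor with zero at `a`. -/
def blaschkeFactor (a z : ℂ) : ℂ :=
  if a = 0 then z
  else ((starRingEnd ℂ a) / (norm a : ℂ)) * ((a - z) / (1 - (starRingEnd ℂ a) * z))

/-- Blaschke product with zero sequence `Z` (with multiplicities given by repetitions). -/
def blaschkeProd {ι : Type} (Z : ι → ℂ) (z : ℂ) : ℂ := ∏' i, blaschkeFactor (Z i) z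

/-- `Z` is a Blaschke sequence in the unit disk. -/
def BlaschkeSeq {ι : Type} (Z : ι → ℂ) : Prop :=
  (∀ i, Z i ∈ unitDisk) ∧ Summable fun i => 1 - norm (Z i)

/-- Stolz angle at `ζ` with aperture `κ`. -/
def stolz (κ : ℝ) (ζ : ℂ) : Set ℂ :=
  {z ∈ unitDisk | norm (z - ζ) ≤ κ * (1 - norm z)}

/-- `NT(Λ)`: points of the circle that are nontangential limits of points of `Λ`. -/
def NTSet (Λ : Set ℂ) : Set ℂ :=
  {ζ | ∃ κ : ℝ, 1 < κ ∧ ∃ u : ℕ → ℂ,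
    (∀ n, u n ∈ Λ ∧ u n ∈ stolz κ ζ) ∧ Tendsto u atTop (𝓝 ζ)}

/-- `f` has nontangential limit `L` at `ζ`. -/
def NTTendsto (f : ℂ → ℂ) (ζ L : ℂ) : Prop :=
  ∀ κ : ℝ, 1 < κ → Tendsto f (𝓝[stolz κ ζ] ζ) (𝓝 L)

/-- The Smirnov class. -/
def SmirnovClass (f : ℂ → ℂ) : Prop :=
  NevClass f ∧ ∃ fstar : ℝ → ℂ,
    (∀ᵐ (θ : ℝ) ∂(volume.restrict (Set.Ioc (0:ℝ) (2*Real.pi))),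
        NTTendsto f (Complex.exp ((θ:ℂ) * Complex.I)) (fstar θ)) ∧
    Tendsto
      (fun r : ℝ => ∫ θ in (0:ℝ)..(2*Real.pi),
        logPlus (norm (f ((r:ℂ) * Complex.exp ((θ:ℂ) * Complex.I)))))
      (𝓝[<] (1:ℝ))
      (𝓝 (∫ θ in (0:ℝ)..(2*Real.pi), logPlus (norm (fstar θ))))

/-- `Λ` is a sampling set for the Smirnov class. -/
def SamplingSmirnov (Λ : Set ℂ) : Prop :=
  ∃ C : ℝ, 0 < C ∧ ∀ f : ℂ → ℂ, SmirnovClass f → NFull f ≤ NRestrict f Λ + C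

/-- `Λ` is a determination set for the Smirnov class. -/
def DeterminationSmirnov (Λ : Set ℂ) : Prop :=
  ∀ f : ℂ → ℂ, SmirnovClass f → (∃ M : ℝ, ∀ z ∈ Λ, norm (f z) ≤ M) →
    ∃ M : ℝ, ∀ z ∈ unitDisk, norm (f z) ≤ M

/-- `Λ` is a strongly sampling set for the Smirnov class. -/
def StrongSamplingSmirnov (Λ : Set ℂ) : Prop :=
  ∀ f : ℂ → ℂ, ∀ h : ℂ → ℝ, SmirnovClass f → PosHarmOn unitDisk h →
    (∀ z ∈ Λ, logPlus (norm (f z)) ≤ h z) →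
    ∀ z ∈ unitDisk, logPlus (norm (f z)) ≤ h z

/-- The class `ℱ`. -/
def PsiF (ψ : ℝ → ℝ) : Prop :=
  MonotoneOn ψ (Set.Ico 0 1) ∧ ContinuousOn ψ (Set.Ico 0 1) ∧ ψ 0 = 0 ∧
  (∀ x ∈ Set.Ico (0:ℝ) 1, 0 ≤ ψ x) ∧
  ∫⁻ x in Set.Ioc (0:ℝ) (1/2), ENNReal.ofReal (ψ x / x ^ 2) ≠ ⊤

/-- Approach region `Γ_ψ(ζ)`. -/
def gammaReg (ψ : ℝ → ℝ) (ζ : ℂ) : Set ℂ :=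
  {z ∈ unitDisk | norm (z - ζ) < 1 ∧ ψ (norm (z - ζ)) ≤ 1 - norm z}

/-- Condition (b): `∑_{λ∈Λ∩Γ_ψ(ζ)} (1-|λ|) = ∞` for all `ψ ∈ ℱ`, `ζ ∈ 𝕋`. -/
def BlaschkeSumDiverges (Λ : Set ℂ) : Prop :=
  ∀ ψ : ℝ → ℝ, PsiF ψ → ∀ ζ : ℂ, norm ζ = 1 →
    ∑' lam : ↥(Λ ∩ gammaReg ψ ζ), ENNReal.ofReal (1 - norm (lam : ℂ)) = ⊤

/-- `g : (0,1] → (0,1]` nondecreasing, continuous, with `g(0⁺)=0`. -/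
def GNetFn (g : ℝ → ℝ) : Prop :=
  MonotoneOn g (Set.Ioc 0 1) ∧ ContinuousOn g (Set.Ioc 0 1) ∧
  (∀ t ∈ Set.Ioc (0:ℝ) 1, g t ∈ Set.Ioc (0:ℝ) 1) ∧ Tendsto g (𝓝[>] (0:ℝ)) (𝓝 0)

/-- `Λ` is a `g`-net. -/
def IsGNet (g : ℝ → ℝ) (Λ : Set ℂ) : Prop :=
  Λ ⊆ unitDisk ∧
  (Λ.Pairwise fun x y =>
    Disjoint (pBall x (g (1 - norm x))) (pBall y (g (1 - norm y)))) ∧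
  ∃ C : ℝ, 0 < C ∧ unitDisk = ⋃ lam ∈ Λ, pBall lam (C * g (1 - norm lam))

/-- Uniformly dense sequence (as a set). -/
def UniformlyDense (Λ : Set ℂ) : Prop :=
  Λ ⊆ unitDisk ∧ (∃ s : ℝ, 0 < s ∧ ∀ x ∈ Λ, ∀ y ∈ Λ, x ≠ y → s ≤ pdist x y) ∧
  ∃ rr : ℝ, rr < 1 ∧ unitDisk = ⋃ lam ∈ Λ, pBall lam rr

/-- `Λ(φ) = ∪_λ D(λ, φ(1-|λ|))`. -/
def unionDisks (Λ : Set ℂ) (φ : ℝ → ℝ) : Set ℂ :=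
  ⋃ lam ∈ Λ, pBall lam (φ (1 - norm lam))

/-- The class `𝒮𝒩` of subharmonic functions with bounded means of `u⁺`. -/
def SNClass (u : ℂ → ℝ) : Prop :=
  UpperSemicontinuousOn u unitDisk ∧
  (∀ z ∈ unitDisk, ∀ ρ : ℝ, 0 < ρ → Metric.closedBall z ρ ⊆ unitDisk →
    u z ≤ (1/(2*Real.pi)) * ∫ θ in (0:ℝ)..(2*Real.pi),
      u (z + (ρ:ℂ) * Complex.exp ((θ:ℂ) * Complex.I))) ∧
  ∃ M : ℝ, ∀ r ∈ Set.Ioo (0:ℝ) 1,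
    ∫ θ in (0:ℝ)..(2*Real.pi), max (u ((r:ℂ) * Complex.exp ((θ:ℂ) * Complex.I))) 0 ≤ M

/-- Upper half-plane. -/
def upperHalf : Set ℂ := {z | 0 < z.im}

/-- Cayley transform from the upper half-plane to the unit disk. -/
def cayley (z : ℂ) : ℂ := (z - Complex.I) / (z + Complex.I)

/-- The discretized rings associated to `{r_n}` and `{ε_n}`. -/
def discRings (r ε : ℕ → ℝ) : Set ℂ :=
  {z | ∃ n j : ℕ, j < Nat.floor (1/((1 - r n) * ε n)) ∧
    z = ((r n : ℝ) : ℂ) * Complex.exp (((2*Real.pi*j*(1 - r n)*ε n : ℝ) : ℂ) * Complex.I)}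

/-- A Blaschke distribution. -/
def BlaschkeDistribution (N : ℕ → ℕ → ℕ) : Prop :=
  Summable fun n : ℕ => (2:ℝ)^(-(n:ℤ)) * ∑ k ∈ Finset.range (2^n), (N n k : ℝ)
section Aux12



def psiA (S : ℕ → ℝ) (x : ℝ) : ℝ := 4 * ∑' m : ℕ, (2:ℝ)^(-(m:ℤ)) * min (max (S m * x) 0) 1 ^ 2

lemma term_nonneg (S : ℕ → ℝ) (x : ℝ) (m : ℕ) :
    0 ≤ (2:ℝ)^(-(m:ℤ)) * min (max (S m * x) 0) 1 ^ 2 := by positivity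

lemma term_le (S : ℕ → ℝ) (x : ℝ) (m : ℕ) :
    (2:ℝ)^(-(m:ℤ)) * min (max (S m * x) 0) 1 ^ 2 ≤ (2:ℝ)^(-(m:ℤ)) := by
  have h0 : 0 ≤ min (max (S m * x) 0) 1 := le_min (le_max_right _ _) zero_le_one
  have h1 : min (max (S m * x) 0) 1 ≤ 1 := min_le_right _ _
  have hsq : min (max (S m * x) 0) 1 ^ 2 ≤ 1 := by nlinarith
  have := zpow_pos (by norm_num : (0:ℝ) < 2) (-(m:ℤ))
  nlinarith

lemma geom_summable : Summable (fun m : ℕ => (2:ℝ)^(-(m:ℤ))) := by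
  have : (fun m : ℕ => (2:ℝ)^(-(m:ℤ))) = fun m : ℕ => (1/2:ℝ)^m := by
    funext m
    rw [one_div, inv_pow, ← zpow_natCast (2:ℝ) m, ← zpow_neg]
  rw [this]
  exact summable_geometric_of_lt_one (by norm_num) (by norm_num)

lemma term_summable (S : ℕ → ℝ) (x : ℝ) :
    Summable (fun m : ℕ => (2:ℝ)^(-(m:ℤ)) * min (max (S m * x) 0) 1 ^ 2) :=
  Summable.of_nonneg_of_le (term_nonneg S x) (term_le S x) geom_summable

lemma psiA_nonneg (S : ℕ → ℝ) (x : ℝ) : 0 ≤ psiA S x := by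
  have : 0 ≤ ∑' m : ℕ, (2:ℝ)^(-(m:ℤ)) * min (max (S m * x) 0) 1 ^ 2 := tsum_nonneg (term_nonneg S x)
  unfold psiA; linarith

lemma psiA_zero (S : ℕ → ℝ) : psiA S 0 = 0 := by
  unfold psiA
  have : ∀ m : ℕ, (2:ℝ)^(-(m:ℤ)) * min (max (S m * 0) 0) 1 ^ 2 = 0 := by
    intro m; simp
  rw [tsum_congr this, tsum_zero]; ring

lemma psiA_mono (S : ℕ → ℝ) (hS : ∀ m, 0 ≤ S m) : Monotone (psiA S) := by
  intro x y hxy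
  unfold psiA
  have h4 : (0:ℝ) ≤ 4 := by norm_num
  refine mul_le_mul_of_nonneg_left ?_ h4
  refine Summable.tsum_le_tsum (fun m => ?_) (term_summable S x) (term_summable S y)
  have hmm : min (max (S m * x) 0) 1 ≤ min (max (S m * y) 0) 1 :=
    min_le_min (max_le_max (mul_le_mul_of_nonneg_left hxy (hS m)) le_rfl) le_rfl
  have h0 : 0 ≤ min (max (S m * x) 0) 1 := le_min (le_max_right _ _) zero_le_one
  exact mul_le_mul_of_nonneg_left (pow_le_pow_left₀ h0 hmm 2)
    (le_of_lt (zpow_pos (by norm_num) _))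

lemma psiA_cont (S : ℕ → ℝ) : Continuous (psiA S) := by
  unfold psiA
  refine continuous_const.mul ?_
  refine continuous_tsum (fun m => ?_) geom_summable (fun m x => ?_)
  · fun_prop
  · rw [Real.norm_eq_abs, _root_.abs_of_nonneg (term_nonneg S x m)]
    exact term_le S x m

lemma psiA_ge (S : ℕ → ℝ) (n : ℕ) (x : ℝ) (hSn : 0 < S n) (hx : (S n)⁻¹ ≤ x) :
    4 * (2:ℝ)^(-(n:ℤ)) ≤ psiA S x := by
  have h1 : (1:ℝ) ≤ S n * x := by
    rw [← mul_inv_cancel₀ (ne_of_gt hSn)]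
    exact mul_le_mul_of_nonneg_left hx (le_of_lt hSn)
  have hterm : (2:ℝ)^(-(n:ℤ)) * min (max (S n * x) 0) 1 ^ 2 = (2:ℝ)^(-(n:ℤ)) := by
    have : min (max (S n * x) 0) 1 = 1 := by
      rw [min_eq_right]
      exact le_max_of_le_left h1
    rw [this]; ring
  have := Summable.le_tsum (term_summable S x) n (fun m _ => term_nonneg S x m)
  unfold psiA
  rw [hterm] at this
  linarith


lemma lint_one_div_sq {a b : ℝ} (ha : 0 < a) :
    ∫⁻ x in Set.Ioc a b, ENNReal.ofReal (1/x^2) ≤ ENNReal.ofReal a⁻¹ := by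
  rcases le_or_gt b a with hba | hab
  · rw [Set.Ioc_eq_empty (not_lt.2 hba)]
    simp
  · have hcont : ContinuousOn (fun x : ℝ => 1/x^2) (Set.Icc a b) := by
      apply ContinuousOn.div continuousOn_const (by fun_prop)
      intro x hx
      have : 0 < x := lt_of_lt_of_le ha hx.1
      positivity
    have hint : IntegrableOn (fun x : ℝ => 1/x^2) (Set.Ioc a b) := by
      exact (hcont.integrableOn_Icc).mono_set Set.Ioc_subset_Icc_self
    have hnn : 0 ≤ᵐ[volume.restrict (Set.Ioc a b)] (fun x : ℝ => 1/x^2) := by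
      filter_upwards with x
      positivity
    rw [← MeasureTheory.ofReal_integral_eq_lintegral_ofReal hint hnn]
    apply ENNReal.ofReal_le_ofReal
    have heq : ∫ x in Set.Ioc a b, 1/x^2 = ∫ x in a..b, 1/x^2 := by
      rw [intervalIntegral.integral_of_le (le_of_lt hab)]
    rw [heq]
    have hzero : (0:ℝ) ∉ Set.uIcc a b := by
      rw [Set.uIcc_of_le (le_of_lt hab)]
      intro h
      exact absurd h.1 (not_le.2 ha)
    have hcongr : ∫ x in a..b, 1/x^2 = ∫ x in a..b, x^(-2:ℤ) := by
      apply intervalIntegral.integral_congr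
      intro x _
      simp [zpow_neg]
    rw [hcongr, integral_zpow (Or.inr ⟨by norm_num, hzero⟩)]
    have hb : 0 < b := lt_trans ha hab
    have h1 : 0 < b⁻¹ := by positivity
    have h2 : (b:ℝ) ^ ((-2:ℤ)+1) = b⁻¹ := by norm_num
    have h3 : (a:ℝ) ^ ((-2:ℤ)+1) = a⁻¹ := by norm_num
    rw [h2, h3]
    have : ((-2:ℤ)+1 : ℝ) = -1 := by push_cast; ring
    rw [this]
    rw [div_neg, div_one]
    linarith


lemma psiA_integral (S : ℕ → ℝ) (hS : ∀ m, 2 ≤ S m)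
    (hsum : Summable (fun m : ℕ => (2:ℝ)^(-(m:ℤ)) * S m)) :
    ∫⁻ x in Set.Ioc (0:ℝ) (1/2), ENNReal.ofReal (psiA S x / x^2) ≠ ⊤ := by
  have hSpos : ∀ m, 0 < S m := fun m => lt_of_lt_of_le (by norm_num) (hS m)
  have h2pos : ∀ m : ℕ, (0:ℝ) < (2:ℝ)^(-(m:ℤ)) := fun m => zpow_pos (by norm_num) _
  set g : ℕ → ℝ → ℝ := fun m x => 4 * ((2:ℝ)^(-(m:ℤ)) * min (max (S m * x) 0) 1 ^ 2) / x^2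
    with hg
  -- pointwise identity on Ioc 0 (1/2)
  have hpt : ∀ x ∈ Set.Ioc (0:ℝ) (1/2),
      ENNReal.ofReal (psiA S x / x^2) = ∑' m : ℕ, ENNReal.ofReal (g m x) := by
    intro x hx
    have hx0 : 0 < x := hx.1
    have hterm_nonneg : ∀ m, 0 ≤ g m x := by
      intro m; rw [hg]; positivity
    have hterm_le : ∀ m, g m x ≤ (2:ℝ)^(-(m:ℤ)) * (4 / x^2) := by
      intro m
      rw [hg]
      simp only
      rw [div_le_iff₀ (by positivity)]
      have h0 : 0 ≤ min (max (S m * x) 0) 1 := le_min (le_max_right _ _) zero_le_one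
      have h1 : min (max (S m * x) 0) 1 ≤ 1 := min_le_right _ _
      have hsq : min (max (S m * x) 0) 1 ^ 2 ≤ 1 := by nlinarith
      have : (2:ℝ)^(-(m:ℤ)) * (4 / x ^ 2) * x ^ 2 = (2:ℝ)^(-(m:ℤ)) * 4 := by
        field_simp
      rw [this]
      nlinarith [h2pos m]
    have hgsum : Summable (fun m => g m x) := by
      refine Summable.of_nonneg_of_le hterm_nonneg hterm_le ?_
      have : Summable (fun m : ℕ => (2:ℝ)^(-(m:ℤ))) := geom_summable
      exact this.mul_right _
    have : psiA S x / x^2 = ∑' m : ℕ, g m x := by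
      have h1 : ∑' m : ℕ, g m x
          = (∑' m : ℕ, (2:ℝ)^(-(m:ℤ)) * min (max (S m * x) 0) 1 ^ 2) * (4/x^2) := by
        rw [← tsum_mul_right]
        apply tsum_congr
        intro m
        rw [hg]
        field_simp
      rw [psiA, h1]
      ring
    rw [this, ENNReal.ofReal_tsum_of_nonneg hterm_nonneg hgsum]
  rw [setLIntegral_congr_fun measurableSet_Ioc hpt]
  rw [lintegral_tsum (fun m => ?_)]
  swap
  · apply Measurable.aemeasurable
    apply Measurable.ennreal_ofReal
    apply Measurable.div (by fun_prop) (by fun_prop)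
  -- per-m bound
  have hm_bound : ∀ m : ℕ, ∫⁻ x in Set.Ioc (0:ℝ) (1/2), ENNReal.ofReal (g m x)
      ≤ ENNReal.ofReal (8 * ((2:ℝ)^(-(m:ℤ)) * S m)) := by
    intro m
    set δ := (S m)⁻¹ with hδ
    have hδpos : 0 < δ := by rw [hδ]; exact inv_pos.2 (hSpos m)
    have hδhalf : δ ≤ 1/2 := by
      rw [hδ]
      rw [inv_le_comm₀ (hSpos m) (by norm_num)]
      simpa using hS m
    have hsplit : Set.Ioc (0:ℝ) (1/2) = Set.Ioc 0 δ ∪ Set.Ioc δ (1/2) :=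
      (Set.Ioc_union_Ioc_eq_Ioc (le_of_lt hδpos) hδhalf).symm
    rw [hsplit, lintegral_union measurableSet_Ioc (Set.Ioc_disjoint_Ioc_of_le le_rfl)]
    have piece1 : ∫⁻ x in Set.Ioc (0:ℝ) δ, ENNReal.ofReal (g m x)
        ≤ ENNReal.ofReal (4 * ((2:ℝ)^(-(m:ℤ)) * S m)) := by
      have hb : ∀ x ∈ Set.Ioc (0:ℝ) δ, ENNReal.ofReal (g m x)
          ≤ ENNReal.ofReal (4 * (2:ℝ)^(-(m:ℤ)) * S m ^ 2) := by
        intro x hx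
        have hx0 : (0:ℝ) < x := hx.1
        apply ENNReal.ofReal_le_ofReal
        rw [hg]
        simp only
        rw [div_le_iff₀ (by positivity : (0:ℝ) < x^2)]
        have h0 : 0 ≤ min (max (S m * x) 0) 1 := le_min (le_max_right _ _) zero_le_one
        have hle : min (max (S m * x) 0) 1 ≤ S m * x := by
          refine le_trans (min_le_left _ _) ?_
          exact max_le le_rfl (mul_nonneg (le_of_lt (hSpos m)) (le_of_lt hx0))
        have hsq : min (max (S m * x) 0) 1 ^ 2 ≤ (S m * x)^2 := by nlinarith
        have := h2pos m
        nlinarith [sq_nonneg (S m * x), hSpos m, sq_nonneg x]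
      calc ∫⁻ x in Set.Ioc (0:ℝ) δ, ENNReal.ofReal (g m x)
          ≤ ∫⁻ _ in Set.Ioc (0:ℝ) δ, ENNReal.ofReal (4 * (2:ℝ)^(-(m:ℤ)) * S m ^ 2) :=
            setLIntegral_mono (by fun_prop) hb
        _ = ENNReal.ofReal (4 * (2:ℝ)^(-(m:ℤ)) * S m ^ 2) * volume (Set.Ioc (0:ℝ) δ) :=
            setLIntegral_const _ _
        _ = ENNReal.ofReal (4 * (2:ℝ)^(-(m:ℤ)) * S m ^ 2) * ENNReal.ofReal δ := by
            rw [Real.volume_Ioc]; norm_num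
        _ = ENNReal.ofReal (4 * (2:ℝ)^(-(m:ℤ)) * S m ^ 2 * δ) := by
            rw [← ENNReal.ofReal_mul (by positivity)]
        _ = ENNReal.ofReal (4 * ((2:ℝ)^(-(m:ℤ)) * S m)) := by
            congr 1
            have hss : S m ^ 2 * (S m)⁻¹ = S m := by
              rw [pow_two, mul_assoc, mul_inv_cancel₀ (hSpos m).ne', mul_one]
            rw [hδ]
            linear_combination (4 * (2:ℝ)^(-(m:ℤ))) * hss
    have piece2 : ∫⁻ x in Set.Ioc δ (1/2:ℝ), ENNReal.ofReal (g m x)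
        ≤ ENNReal.ofReal (4 * ((2:ℝ)^(-(m:ℤ)) * S m)) := by
      have hb : ∀ x ∈ Set.Ioc δ (1/2:ℝ), ENNReal.ofReal (g m x)
          ≤ ENNReal.ofReal (4 * (2:ℝ)^(-(m:ℤ))) * ENNReal.ofReal (1/x^2) := by
        intro x hx
        have hx0 : 0 < x := lt_trans hδpos hx.1
        rw [← ENNReal.ofReal_mul (by positivity)]
        apply ENNReal.ofReal_le_ofReal
        rw [hg]
        simp only
        rw [div_le_iff₀ (by positivity : (0:ℝ) < x^2)]
        have h0 : 0 ≤ min (max (S m * x) 0) 1 := le_min (le_max_right _ _) zero_le_one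
        have h1 : min (max (S m * x) 0) 1 ≤ 1 := min_le_right _ _
        have hsq : min (max (S m * x) 0) 1 ^ 2 ≤ 1 := by nlinarith
        have hxx : 4 * (2:ℝ)^(-(m:ℤ)) * (1/x^2) * x^2 = 4 * (2:ℝ)^(-(m:ℤ)) := by
          field_simp
        rw [hxx]
        nlinarith [h2pos m]
      calc ∫⁻ x in Set.Ioc δ (1/2:ℝ), ENNReal.ofReal (g m x)
          ≤ ∫⁻ x in Set.Ioc δ (1/2:ℝ), ENNReal.ofReal (4 * (2:ℝ)^(-(m:ℤ))) * ENNReal.ofReal (1/x^2) :=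
            setLIntegral_mono (by fun_prop) hb
        _ = ENNReal.ofReal (4 * (2:ℝ)^(-(m:ℤ))) * ∫⁻ x in Set.Ioc δ (1/2:ℝ), ENNReal.ofReal (1/x^2) :=
            lintegral_const_mul _ (by fun_prop)
        _ ≤ ENNReal.ofReal (4 * (2:ℝ)^(-(m:ℤ))) * ENNReal.ofReal δ⁻¹ := by
            exact mul_le_mul_right (lint_one_div_sq hδpos) _
        _ = ENNReal.ofReal (4 * ((2:ℝ)^(-(m:ℤ)) * S m)) := by
            rw [← ENNReal.ofReal_mul (by positivity)]
            congr 1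
            rw [hδ, inv_inv]
            ring
    calc _ ≤ ENNReal.ofReal (4 * ((2:ℝ)^(-(m:ℤ)) * S m)) + ENNReal.ofReal (4 * ((2:ℝ)^(-(m:ℤ)) * S m)) :=
          add_le_add piece1 piece2
      _ = ENNReal.ofReal (8 * ((2:ℝ)^(-(m:ℤ)) * S m)) := by
          have hnn : (0:ℝ) ≤ 4 * ((2:ℝ)^(-(m:ℤ)) * S m) :=
            mul_nonneg (by norm_num) (mul_nonneg (le_of_lt (h2pos m)) (le_of_lt (hSpos m)))
          rw [← ENNReal.ofReal_add hnn hnn]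
          congr 1
          ring
  have : ∑' m : ℕ, ∫⁻ x in Set.Ioc (0:ℝ) (1/2), ENNReal.ofReal (g m x)
      ≤ ∑' m : ℕ, ENNReal.ofReal (8 * ((2:ℝ)^(-(m:ℤ)) * S m)) :=
    ENNReal.tsum_le_tsum hm_bound
  apply ne_top_of_le_ne_top ?_ this
  rw [← ENNReal.ofReal_tsum_of_nonneg (fun m =>
    mul_nonneg (by norm_num) (mul_nonneg (le_of_lt (h2pos m)) (le_of_lt (hSpos m)))) (hsum.mul_left 8)]
  exact ENNReal.ofReal_ne_top



lemma annulus_exists {z : ℂ} (hz : z ∈ unitDisk) :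
    ∃ n : ℕ, 1 - (2:ℝ)^(-(n:ℤ)) ≤ norm z ∧ norm z < 1 - (2:ℝ)^(-(n:ℤ)-1) := by
  have habs : norm z < 1 := by
    simpa [unitDisk, Complex.dist_eq] using hz
  have hpos : 0 < 1 - norm z := by linarith
  have hex : ∃ m : ℕ, (2:ℝ)^(-(m:ℤ)-1) < 1 - norm z := by
    obtain ⟨m, hm⟩ := exists_pow_lt_of_lt_one hpos (by norm_num : (1/2:ℝ) < 1)
    refine ⟨m, lt_of_le_of_lt ?_ hm⟩
    have hq : ((1:ℝ)/2)^m = (2:ℝ)^(-(m:ℤ)) := by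
      rw [one_div, inv_pow, ← zpow_natCast (2:ℝ) m, ← zpow_neg]
    rw [hq]
    exact zpow_le_zpow_right₀ (by norm_num) (by omega)
  classical
  set n := Nat.find hex with hn
  have h1 : (2:ℝ)^(-(n:ℤ)-1) < 1 - norm z := Nat.find_spec hex
  refine ⟨n, ?_, by linarith⟩
  rcases Nat.eq_zero_or_pos n with h0 | hpos'
  · rw [h0]
    simpa using norm_nonneg z
  · have hmin := Nat.find_min hex (m := n - 1) (by omega)
    push_neg at hmin
    have : (-(((n:ℤ)) - 1) - 1 : ℤ) = -(n:ℤ) := by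
      have : (1:ℤ) ≤ (n:ℤ) := by exact_mod_cast hpos'
      omega
    have hcast : ((n - 1 : ℕ) : ℤ) = (n:ℤ) - 1 := by
      have : (1:ℕ) ≤ n := hpos'
      omega
    rw [hcast] at hmin
    rw [this] at hmin
    linarith

lemma mem_dSquare_of {z : ℂ} {n : ℕ}
    (h1 : 1 - (2:ℝ)^(-(n:ℤ)) ≤ norm z)
    (h2 : norm z < 1 - (2:ℝ)^(-(n:ℤ)-1)) :
    ∃ k : ℕ, k < 2^n ∧ z ∈ dSquare n k ∧
      ∃ θ : ℝ, 0 ≤ θ ∧ θ < 2*Real.pi ∧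
        2*Real.pi*k * (2:ℝ)^(-(n:ℤ)) ≤ θ ∧ θ < 2*Real.pi*(k+1) * (2:ℝ)^(-(n:ℤ)) ∧
        z = ((norm z : ℝ):ℂ) * Complex.exp ((θ:ℂ) * Complex.I) := by
  have hπ := Real.pi_pos
  set θ₀ := Complex.arg z with hθ₀
  have harg1 : -Real.pi < θ₀ := Complex.neg_pi_lt_arg z
  have harg2 : θ₀ ≤ Real.pi := Complex.arg_le_pi z
  set θ : ℝ := if θ₀ < 0 then θ₀ + 2*Real.pi else θ₀ with hθ
  have hθ0 : 0 ≤ θ := by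
    rw [hθ]; split_ifs with h
    · linarith
    · linarith [not_lt.1 h]
  have hθ2π : θ < 2*Real.pi := by
    rw [hθ]; split_ifs with h
    · linarith
    · linarith
  have hrep : z = ((norm z : ℝ):ℂ) * Complex.exp ((θ:ℂ) * Complex.I) := by
    have hbase := Complex.norm_mul_exp_arg_mul_I z
    have hper : Complex.exp (((θ₀ + 2*Real.pi : ℝ):ℂ) * Complex.I)
        = Complex.exp ((θ₀:ℂ) * Complex.I) := by
      push_cast
      rw [add_mul, Complex.exp_add, Complex.exp_two_pi_mul_I, mul_one]
    rw [hθ]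
    split_ifs with h
    · rw [hper]
      exact hbase.symm
    · exact hbase.symm
  -- choose k
  have h2n : (0:ℝ) < 2*Real.pi*(2:ℝ)^(-(n:ℤ)) := by positivity
  set k : ℕ := Nat.floor (θ / (2*Real.pi*(2:ℝ)^(-(n:ℤ)))) with hk
  have hfl : (k:ℝ) ≤ θ / (2*Real.pi*(2:ℝ)^(-(n:ℤ))) := Nat.floor_le (by positivity)
  have hfl2 : θ / (2*Real.pi*(2:ℝ)^(-(n:ℤ))) < (k:ℝ) + 1 := Nat.lt_floor_add_one _
  have hlow : 2*Real.pi*k * (2:ℝ)^(-(n:ℤ)) ≤ θ := by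
    have := mul_le_mul_of_nonneg_right hfl (le_of_lt h2n)
    rw [div_mul_cancel₀ _ (ne_of_gt h2n)] at this
    linarith [this]
  have hhigh : θ < 2*Real.pi*((k:ℝ)+1) * (2:ℝ)^(-(n:ℤ)) := by
    have := mul_lt_mul_of_pos_right hfl2 h2n
    rw [div_mul_cancel₀ _ (ne_of_gt h2n)] at this
    calc θ < ((k:ℝ)+1) * (2*Real.pi*(2:ℝ)^(-(n:ℤ))) := this
      _ = 2*Real.pi*((k:ℝ)+1) * (2:ℝ)^(-(n:ℤ)) := by ring
  have hklt : k < 2^n := by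
    have h2nn : ((2:ℝ)^(-(n:ℤ)))⁻¹ = (2:ℝ)^(n:ℤ) := by
      rw [← zpow_neg]; norm_num
    have : θ / (2*Real.pi*(2:ℝ)^(-(n:ℤ))) < (2:ℝ)^(n:ℕ) := by
      rw [div_lt_iff₀ h2n]
      have : (2:ℝ)^(n:ℕ) * (2*Real.pi*(2:ℝ)^(-(n:ℤ))) = 2*Real.pi := by
        rw [← zpow_natCast (2:ℝ) n]
        rw [mul_comm, mul_assoc]
        rw [← zpow_add₀ (by norm_num : (2:ℝ) ≠ 0)]
        simp
      rw [this]
      exact hθ2π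
    have hlt := lt_of_le_of_lt hfl this
    have : (k:ℝ) < ((2^n : ℕ) : ℝ) := by push_cast; exact hlt
    exact_mod_cast this
  exact ⟨k, hklt, ⟨norm z, θ, h1, h2, hlow, hhigh, hrep⟩, θ, hθ0, hθ2π, hlow, hhigh, hrep⟩

lemma chord_lb {r φ : ℝ} (hr : 1/2 ≤ r) (hφ0 : 0 ≤ φ) (hφπ : φ ≤ Real.pi) :
    φ / Real.pi ≤ norm ((r:ℂ) * Complex.exp ((φ:ℂ) * Complex.I) - 1) := by
  have hπ := Real.pi_pos
  set z : ℂ := (r:ℂ) * Complex.exp ((φ:ℂ) * Complex.I) with hz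
  have him : (z - 1).im = r * Real.sin φ := by
    rw [hz, Complex.exp_mul_I]
    simp [Complex.cos_ofReal_re, Complex.sin_ofReal_re]
  have hre : (z - 1).re = r * Real.cos φ - 1 := by
    rw [hz, Complex.exp_mul_I]
    simp [Complex.cos_ofReal_re, Complex.sin_ofReal_re]
  rcases le_or_gt φ (Real.pi/2) with hc | hc
  · have hsin := Real.mul_le_sin hφ0 hc
    have h1 : r * Real.sin φ ≤ |(z - 1).im| := by
      rw [him]
      exact le_abs_self _
    have h2 : |(z-1).im| ≤ norm (z - 1) := Complex.abs_im_le_norm _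
    have h3 : φ / Real.pi ≤ r * Real.sin φ := by
      rw [div_le_iff₀ hπ]
      have hs0 : 0 ≤ Real.sin φ := Real.sin_nonneg_of_nonneg_of_le_pi hφ0 hφπ
      have h4 : 2*φ ≤ Real.sin φ * Real.pi := by
        rw [div_mul_eq_mul_div, div_le_iff₀ hπ] at hsin
        linarith
      nlinarith [mul_nonneg hs0 (le_of_lt hπ)]
    linarith
  · have hcos : Real.cos φ ≤ 0 := Real.cos_nonpos_of_pi_div_two_le_of_le (le_of_lt hc)
      (by linarith)
    have h1 : (1:ℝ) ≤ |(z-1).re| := by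
      rw [hre, abs_of_nonpos (by nlinarith)]
      nlinarith
    have h2 : |(z-1).re| ≤ norm (z - 1) := Complex.abs_re_le_norm _
    have h3 : φ / Real.pi ≤ 1 := by
      rw [div_le_one hπ]
      exact hφπ
    linarith

lemma k_bound {z : ℂ} {n k : ℕ} {θ δ : ℝ}
    (hθ0 : 0 ≤ θ) (hθ2π : θ < 2*Real.pi)
    (hlow : 2*Real.pi*k * (2:ℝ)^(-(n:ℤ)) ≤ θ)
    (hhigh : θ < 2*Real.pi*((k:ℝ)+1) * (2:ℝ)^(-(n:ℤ)))
    (hr : 1/2 ≤ norm z)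
    (hrep : z = ((norm z : ℝ):ℂ) * Complex.exp ((θ:ℂ) * Complex.I))
    (hδ : norm (z - 1) < δ) :
    (k:ℝ) * (2:ℝ)^(-(n:ℤ)) ≤ δ ∨ (1:ℝ) ≤ ((k:ℝ)+1) * (2:ℝ)^(-(n:ℤ)) + δ := by
  have hπ := Real.pi_pos
  have hδ0 : 0 < δ := lt_of_le_of_lt (norm_nonneg _) hδ
  have h2n0 : (0:ℝ) < (2:ℝ)^(-(n:ℤ)) := zpow_pos (by norm_num) _
  rcases le_or_gt θ Real.pi with hcase | hcase
  · left
    have hch := chord_lb hr hθ0 hcase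
    rw [← hrep] at hch
    have hθδ : θ < Real.pi * δ := by
      rw [div_le_iff₀ hπ] at hch
      nlinarith
    have : 2*Real.pi*k * (2:ℝ)^(-(n:ℤ)) < Real.pi * δ := lt_of_le_of_lt hlow hθδ
    have hk2 : 2 * ((k:ℝ) * (2:ℝ)^(-(n:ℤ))) < δ := by nlinarith
    have hk0 : 0 ≤ (k:ℝ) * (2:ℝ)^(-(n:ℤ)) := by positivity
    linarith
  · right
    set φ := 2*Real.pi - θ with hφ
    have hφ0 : 0 ≤ φ := by rw [hφ]; linarith
    have hφπ : φ ≤ Real.pi := by rw [hφ]; linarith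
    -- conjugate representation
    have hconj : norm (z - 1)
        = norm (((norm z : ℝ):ℂ) * Complex.exp ((φ:ℂ) * Complex.I) - 1) := by
      have h1 : norm (z - 1) = norm ((starRingEnd ℂ) (z - 1)) :=
        (Complex.norm_conj _).symm
      have h2 : (starRingEnd ℂ) (z - 1)
          = ((norm z : ℝ):ℂ) * Complex.exp ((-θ:ℝ) * Complex.I) - 1 := by
        rw [map_sub, map_one]
        nth_rewrite 1 [hrep]
        rw [map_mul, Complex.conj_ofReal]
        congr 1
        rw [← Complex.exp_conj, map_mul, Complex.conj_ofReal, Complex.conj_I]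
        push_cast
        ring_nf
      have h3 : Complex.exp (((-θ:ℝ):ℂ) * Complex.I) = Complex.exp ((φ:ℂ) * Complex.I) := by
        rw [hφ]
        push_cast
        rw [show ((2:ℂ)*Real.pi - θ) * Complex.I
          = 2*Real.pi*Complex.I + (-θ) * Complex.I by ring]
        rw [Complex.exp_add, Complex.exp_two_pi_mul_I, one_mul]
      rw [h1, h2, ← h3]
    have hch := chord_lb hr hφ0 hφπ
    rw [← hconj] at hch
    have hφδ : φ < Real.pi * δ := by
      rw [div_le_iff₀ hπ] at hch
      nlinarith
    have : 2*Real.pi - θ < Real.pi * δ := by rw [hφ] at hφδ; exact hφδ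
    nlinarith


lemma psiA_psiF (S : ℕ → ℝ) (hS : ∀ m, 2 ≤ S m)
    (hsum : Summable (fun m : ℕ => (2:ℝ)^(-(m:ℤ)) * S m)) : PsiF (psiA S) := by
  have hS0 : ∀ m, 0 ≤ S m := fun m => le_trans (by norm_num) (hS m)
  exact ⟨(psiA_mono S hS0).monotoneOn _, (psiA_cont S).continuousOn, psiA_zero S,
    fun x _ => psiA_nonneg S x, psiA_integral S hS hsum⟩

lemma abs_lb_of_mem_dSquare {z : ℂ} {n k : ℕ} (hz : z ∈ dSquare n k) :
    1 - (2:ℝ)^(-(n:ℤ)) ≤ norm z := by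
  obtain ⟨r, θ, hr1, hr2, -, -, hrep⟩ := hz
  have h2n1 : (2:ℝ)^(-(n:ℤ)) ≤ 1 := zpow_le_one_of_nonpos₀ (by norm_num) (by omega)
  have hr0 : 0 ≤ r := by linarith
  rw [hrep, norm_mul, Complex.norm_exp_ofReal_mul_I, mul_one, Complex.norm_real, Real.norm_eq_abs,
    _root_.abs_of_nonneg hr0]
  exact hr1

end Aux12


/-- if the Blaschke sums over all regions `Γ_ψ(ζ)` diverge and
`#(Λ ∩ Q_{n,k}) ≃ M_n` uniformly in `k`, then `∑ (M_n 2^{-n})^{1/2} = ∞`. -/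
theorem gamma_divergence_forces_Mn_sum (Λ : Set ℂ) (hΛ : Λ ⊆ unitDisk)
    (hdiv : BlaschkeSumDiverges Λ)
    (M : ℕ → ℕ) (hM : ∀ n, 0 < M n) (C : ℝ) (hC : 0 < C)
    (hcomp : ∀ n k : ℕ, k < 2^n →
      C⁻¹ * (M n : ℝ) ≤ ((Λ ∩ dSquare n k).ncard : ℝ) ∧
      ((Λ ∩ dSquare n k).ncard : ℝ) ≤ C * (M n : ℝ)) :
    ¬ Summable (fun n : ℕ => Real.sqrt ((M n : ℝ) * (2:ℝ)^(-(n:ℤ)))) := by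

  classical
  intro hsum
  have hπ := Real.pi_pos
  have h2pos : ∀ m : ℕ, (0:ℝ) < (2:ℝ)^(-(m:ℤ)) := fun m => zpow_pos (by norm_num) _
  set b : ℕ → ℝ := fun n => Real.sqrt ((M n : ℝ) * (2:ℝ)^(-(n:ℤ))) with hb
  have hMpos : ∀ n, (0:ℝ) < (M n : ℝ) := fun n => by exact_mod_cast hM n
  have hbpos : ∀ n, 0 < b n := fun n => Real.sqrt_pos.2 (mul_pos (hMpos n) (h2pos n))
  have hbsq : ∀ n, b n ^ 2 = (M n : ℝ) * (2:ℝ)^(-(n:ℤ)) := fun n =>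
    Real.sq_sqrt (le_of_lt (mul_pos (hMpos n) (h2pos n)))
  set S : ℕ → ℝ := fun m => max ((2:ℝ)^(m:ℕ) * b m) 2 with hSdef
  have hS2 : ∀ m, 2 ≤ S m := fun m => le_max_right _ _
  have hSpos : ∀ m, 0 < S m := fun m => lt_of_lt_of_le (by norm_num) (hS2 m)
  have hpowinv : ∀ m : ℕ, (2:ℝ)^(-(m:ℤ)) * (2:ℝ)^(m:ℕ) = 1 := by
    intro m
    rw [← zpow_natCast (2:ℝ) m, ← zpow_add₀ (by norm_num : (2:ℝ) ≠ 0)]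
    norm_num
  have hSsum : Summable (fun m : ℕ => (2:ℝ)^(-(m:ℤ)) * S m) := by
    refine Summable.of_nonneg_of_le
      (fun m => mul_nonneg (le_of_lt (h2pos m)) (le_of_lt (hSpos m)))
      (fun m => ?_) (hsum.add (geom_summable.mul_left 2))
    simp only [hSdef]
    rw [mul_max_of_nonneg _ _ (le_of_lt (h2pos m))]
    apply max_le
    · have : (2:ℝ)^(-(m:ℤ)) * ((2:ℝ)^(m:ℕ) * b m) = b m := by
        rw [← mul_assoc, hpowinv m, one_mul]
      rw [this]
      have := h2pos m
      simp only [hb]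
      nlinarith [hbpos m]
    · have := hbpos m
      simp only [hb] at this ⊢
      nlinarith [h2pos m]
  -- the region function
  set ψ : ℝ → ℝ := psiA S with hψdef
  have hψF : PsiF ψ := psiA_psiF S hS2 hSsum
  have habs1 : norm (1:ℂ) = 1 := by simp
  have htop := hdiv ψ hψF 1 habs1
  set Γ : Set ℂ := gammaReg ψ 1 with hΓ
  -- key smallness: points of Γ in the n-th annulus are within (S n)⁻¹ of 1
  have hclose : ∀ z ∈ Γ, ∀ n : ℕ, 1 - (2:ℝ)^(-(n:ℤ)) ≤ norm z →
      norm (z - 1) < (S n)⁻¹ := by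
    intro z hzΓ n hzn
    obtain ⟨hzD, hz1, hzψ⟩ := hzΓ
    by_contra hcon
    push_neg at hcon
    have hge := psiA_ge S n (norm (z - 1)) (hSpos n) hcon
    rw [← hψdef] at hge
    have : 1 - norm z ≤ (2:ℝ)^(-(n:ℤ)) := by linarith
    have := h2pos n
    linarith
  -- the finsets of relevant squares
  set B : ℕ → Set ℂ := fun n => (Λ ∩ Γ) ∩
    {z : ℂ | 1 - (2:ℝ)^(-(n:ℤ)) ≤ norm z ∧ norm z < 1 - (2:ℝ)^(-(n:ℤ)-1)}
    with hBdef
  set K : ℕ → Finset ℕ := fun n =>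
    (Finset.range (2^n)).filter (fun k => (B n ∩ dSquare n k).Nonempty) with hKdef
  -- cardinality bound for K n
  have hKcard : ∀ n : ℕ, ((K n).card : ℝ) ≤ 2 * ((2:ℝ)^(n:ℕ) * (S n)⁻¹) + 3 := by
    intro n
    have hδpos : 0 < (S n)⁻¹ := inv_pos.2 (hSpos n)
    set J : ℕ := Nat.floor ((2:ℝ)^(n:ℕ) * (S n)⁻¹) with hJ
    have hJle : (J:ℝ) ≤ (2:ℝ)^(n:ℕ) * (S n)⁻¹ := Nat.floor_le
      (mul_nonneg (by positivity) (le_of_lt (inv_pos.2 (hSpos n))))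
    have hsubset : K n ⊆ Finset.range (J+1) ∪ Finset.Ico (2^n - (J+2)) (2^n) := by
      intro k hk
      rw [hKdef] at hk
      simp only [Finset.mem_filter, Finset.mem_range] at hk
      obtain ⟨hklt, lam, hlamB, hlamQ⟩ := hk
      rcases Nat.eq_zero_or_pos n with hn0 | hn1
      · subst hn0
        rw [pow_zero] at hklt
        have hk0 : k = 0 := by omega
        subst hk0
        exact Finset.mem_union_left _ (Finset.mem_range.2 (Nat.succ_pos J))
      -- n ≥ 1
      obtain ⟨r, θ, hr1, hr2, hlow, hhigh, hrep⟩ := hlamQ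
      have h2n1 : (2:ℝ)^(-(n:ℤ)) ≤ 1 := zpow_le_one_of_nonpos₀ (by norm_num) (by omega)
      have hr0 : 0 ≤ r := by linarith
      have habsr : norm lam = r := by
        rw [hrep, norm_mul, Complex.norm_exp_ofReal_mul_I, mul_one, Complex.norm_real, Real.norm_eq_abs,
          _root_.abs_of_nonneg hr0]
      have hrep' : lam = ((norm lam : ℝ):ℂ) * Complex.exp ((θ:ℂ) * Complex.I) := by
        rw [habsr]; exact hrep
      have hhalf : (2:ℝ)^(-(n:ℤ)) ≤ 1/2 := by
        have : (-(n:ℤ)) ≤ -1 := by omega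
        calc (2:ℝ)^(-(n:ℤ)) ≤ (2:ℝ)^(-1:ℤ) := zpow_le_zpow_right₀ (by norm_num) this
          _ = 1/2 := by norm_num
      have hrhalf : 1/2 ≤ norm lam := by rw [habsr]; linarith
      have hθ0 : 0 ≤ θ := le_trans (by positivity) hlow
      have hθ2π : θ < 2*Real.pi := by
        have hk1 : ((k:ℝ)+1) ≤ (2:ℝ)^(n:ℕ) := by
          have : (k+1 : ℕ) ≤ 2^n := hklt
          exact_mod_cast this
        have : 2*Real.pi*((k:ℝ)+1) * (2:ℝ)^(-(n:ℤ)) ≤ 2*Real.pi := by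
          have h1 : ((k:ℝ)+1) * (2:ℝ)^(-(n:ℤ)) ≤ (2:ℝ)^(n:ℕ) * (2:ℝ)^(-(n:ℤ)) :=
            mul_le_mul_of_nonneg_right hk1 (le_of_lt (h2pos n))
          have h2 : (2:ℝ)^(n:ℕ) * (2:ℝ)^(-(n:ℤ)) = 1 := by
            rw [mul_comm]; exact hpowinv n
          nlinarith
        calc θ < 2*Real.pi*((k:ℝ)+1) * (2:ℝ)^(-(n:ℤ)) := hhigh
          _ ≤ 2*Real.pi := this
      have hδ : norm (lam - 1) < (S n)⁻¹ :=
        hclose lam hlamB.1.2 n hlamB.2.1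
      have hkb := k_bound hθ0 hθ2π hlow hhigh hrhalf hrep' hδ
      rcases hkb with hkb | hkb
      · apply Finset.mem_union_left
        rw [Finset.mem_range]
        have hkR : (k:ℝ) ≤ (2:ℝ)^(n:ℕ) * (S n)⁻¹ := by
          have h1 : (k:ℝ) * ((2:ℝ)^(-(n:ℤ)) * (2:ℝ)^(n:ℕ)) ≤ (S n)⁻¹ * (2:ℝ)^(n:ℕ) := by
            rw [← mul_assoc]
            exact mul_le_mul_of_nonneg_right hkb (by positivity)
          rw [hpowinv n, mul_one] at h1
          linarith [h1]
        have : k ≤ J := Nat.le_floor hkR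
        omega
      · apply Finset.mem_union_right
        rw [Finset.mem_Ico]
        refine ⟨?_, hklt⟩
        have h2n : ((2:ℝ)^(n:ℕ)) ≤ (k:ℝ) + 1 + (2:ℝ)^(n:ℕ) * (S n)⁻¹ := by
          have h1 : (2:ℝ)^(n:ℕ) * 1 ≤ (2:ℝ)^(n:ℕ) * (((k:ℝ)+1) * (2:ℝ)^(-(n:ℤ)) + (S n)⁻¹) :=
            mul_le_mul_of_nonneg_left hkb (by positivity)
          rw [mul_one, mul_add] at h1
          have h2 : (2:ℝ)^(n:ℕ) * (((k:ℝ)+1) * (2:ℝ)^(-(n:ℤ))) = (k:ℝ)+1 := by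
            rw [mul_comm ((k:ℝ)+1) _, ← mul_assoc, mul_comm ((2:ℝ)^(n:ℕ)) _, hpowinv n,
              one_mul]
          rw [h2] at h1
          linarith
        have hnat : 2^n ≤ k + (J + 2) := by
          have hR : ((2:ℝ)^(n:ℕ)) ≤ ((k + (J+2) : ℕ) : ℝ) := by
            push_cast
            linarith [hJle, h2n, Nat.lt_floor_add_one ((2:ℝ)^(n:ℕ) * (S n)⁻¹)]
          have : ((2^n : ℕ) : ℝ) ≤ ((k + (J+2) : ℕ) : ℝ) := by
            push_cast at hR ⊢
            linarith
          exact_mod_cast this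
        omega
    calc ((K n).card : ℝ) ≤ ((Finset.range (J+1) ∪ Finset.Ico (2^n - (J+2)) (2^n)).card : ℝ) := by
          exact_mod_cast Finset.card_le_card hsubset
      _ ≤ (((J+1) + ((2^n) - (2^n - (J+2))) : ℕ) : ℝ) := by
          have h1 := Finset.card_union_le (Finset.range (J+1)) (Finset.Ico (2^n - (J+2)) (2^n))
          have h2 : (Finset.range (J+1)).card = J+1 := Finset.card_range _
          have h3 : (Finset.Ico (2^n - (J+2)) (2^n)).card = 2^n - (2^n - (J+2)) :=
            Nat.card_Ico _ _
          have := h1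
          rw [h2, h3] at this
          exact_mod_cast this
      _ ≤ ((2*J + 3 : ℕ) : ℝ) := by
          have : (J+1) + ((2^n) - (2^n - (J+2))) ≤ 2*J + 3 := by omega
          exact_mod_cast this
      _ ≤ 2 * ((2:ℝ)^(n:ℕ) * (S n)⁻¹) + 3 := by
          push_cast
          linarith
  -- tsum bound per annulus
  have hBbound : ∀ n : ℕ, ∑' (x : ↥(B n)), ENNReal.ofReal (1 - norm (x:ℂ))
      ≤ ENNReal.ofReal ((2 * ((2:ℝ)^(n:ℕ) * (S n)⁻¹) + 3) * (C * (M n : ℝ) * (2:ℝ)^(-(n:ℤ)))) := by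
    intro n
    have hfin : ∀ k : ℕ, k < 2^n → (Λ ∩ dSquare n k).Finite := by
      intro k hk
      by_contra hinf
      have h0 := Set.Infinite.ncard hinf
      have := (hcomp n k hk).1
      rw [h0] at this
      simp only [Nat.cast_zero] at this
      nlinarith [hMpos n, inv_pos.2 hC]
    have hsub : B n ⊆ ⋃ k ∈ K n, (Λ ∩ dSquare n k) := by
      intro z hz
      obtain ⟨⟨hzΛ, hzΓ⟩, hz1, hz2⟩ := hz
      obtain ⟨k, hklt, hzQ, -⟩ := mem_dSquare_of hz1 hz2
      have hkK : k ∈ K n := by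
        rw [hKdef]
        simp only [Finset.mem_filter, Finset.mem_range]
        exact ⟨hklt, z, ⟨⟨hzΛ, hzΓ⟩, hz1, hz2⟩, hzQ⟩
      exact Set.mem_biUnion hkK ⟨hzΛ, hzQ⟩
    calc ∑' (x : ↥(B n)), ENNReal.ofReal (1 - norm (x:ℂ))
        ≤ ∑' (x : ↥(⋃ k ∈ K n, (Λ ∩ dSquare n k))), ENNReal.ofReal (1 - norm (x:ℂ)) :=
          ENNReal.tsum_mono_subtype (fun z => ENNReal.ofReal (1 - norm z)) hsub
      _ ≤ ∑ k ∈ K n, ∑' (x : ↥(Λ ∩ dSquare n k)), ENNReal.ofReal (1 - norm (x:ℂ)) :=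
          ENNReal.tsum_biUnion_le (fun z => ENNReal.ofReal (1 - norm z)) (K n)
            (fun k => Λ ∩ dSquare n k)
      _ ≤ ∑ _k ∈ K n, ENNReal.ofReal (C * (M n : ℝ) * (2:ℝ)^(-(n:ℤ))) := by
          apply Finset.sum_le_sum
          intro k hk
          have hklt : k < 2^n := by
            rw [hKdef] at hk
            simp only [Finset.mem_filter, Finset.mem_range] at hk
            exact hk.1
          have hfink := hfin k hklt
          calc ∑' (x : ↥(Λ ∩ dSquare n k)), ENNReal.ofReal (1 - norm (x:ℂ))
              ≤ ∑' (_x : ↥(Λ ∩ dSquare n k)), ENNReal.ofReal ((2:ℝ)^(-(n:ℤ))) := by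
                apply ENNReal.tsum_le_tsum
                intro x
                apply ENNReal.ofReal_le_ofReal
                have := abs_lb_of_mem_dSquare x.2.2
                linarith
            _ = ∑ _x ∈ hfink.toFinset, ENNReal.ofReal ((2:ℝ)^(-(n:ℤ))) := by
                rw [tsum_congr_set_coe (fun _ => ENNReal.ofReal ((2:ℝ)^(-(n:ℤ))))
                  hfink.coe_toFinset.symm]
                exact Finset.tsum_subtype' hfink.toFinset
                  (fun _ => ENNReal.ofReal ((2:ℝ)^(-(n:ℤ))))
            _ = (hfink.toFinset.card : ENNReal) * ENNReal.ofReal ((2:ℝ)^(-(n:ℤ))) := by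
                rw [Finset.sum_const, nsmul_eq_mul]
            _ ≤ ENNReal.ofReal (C * (M n : ℝ)) * ENNReal.ofReal ((2:ℝ)^(-(n:ℤ))) := by
                apply mul_le_mul_left
                rw [← ENNReal.ofReal_natCast]
                apply ENNReal.ofReal_le_ofReal
                have hle := (hcomp n k hklt).2
                rw [Set.ncard_eq_toFinset_card _ hfink] at hle
                exact hle
            _ = ENNReal.ofReal (C * (M n : ℝ) * (2:ℝ)^(-(n:ℤ))) := by
                rw [← ENNReal.ofReal_mul (mul_nonneg (le_of_lt hC) (le_of_lt (hMpos n)))]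
      _ = ((K n).card : ENNReal) * ENNReal.ofReal (C * (M n : ℝ) * (2:ℝ)^(-(n:ℤ))) := by
          rw [Finset.sum_const, nsmul_eq_mul]
      _ ≤ ENNReal.ofReal (2 * ((2:ℝ)^(n:ℕ) * (S n)⁻¹) + 3)
            * ENNReal.ofReal (C * (M n : ℝ) * (2:ℝ)^(-(n:ℤ))) := by
          apply mul_le_mul_left
          rw [← ENNReal.ofReal_natCast]
          exact ENNReal.ofReal_le_ofReal (hKcard n)
      _ = ENNReal.ofReal ((2 * ((2:ℝ)^(n:ℕ) * (S n)⁻¹) + 3) * (C * (M n : ℝ) * (2:ℝ)^(-(n:ℤ)))) := by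
          have hnn : (0:ℝ) ≤ 2 * ((2:ℝ)^(n:ℕ) * (S n)⁻¹) + 3 := by
            have := mul_nonneg (le_of_lt (pow_pos (show (0:ℝ) < 2 by norm_num) n))
              (le_of_lt (inv_pos.2 (hSpos n)))
            linarith
          rw [← ENNReal.ofReal_mul hnn]
  -- real bound on the per-annulus constant
  set Btot : ℝ := ∑' n, b n with hBtot
  have hble : ∀ n, b n ≤ Btot := fun n => Summable.le_tsum hsum n (fun m _ => le_of_lt (hbpos m))
  have hBtot0 : 0 ≤ Btot := le_trans (le_of_lt (hbpos 0)) (hble 0)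
  have hreal : ∀ n : ℕ, (2 * ((2:ℝ)^(n:ℕ) * (S n)⁻¹) + 3) * (C * (M n : ℝ) * (2:ℝ)^(-(n:ℤ)))
      ≤ (C * (2 + 3 * Btot)) * b n := by
    intro n
    have hSbig : (2:ℝ)^(n:ℕ) * b n ≤ S n := le_max_left _ _
    have hinv : (S n)⁻¹ ≤ ((2:ℝ)^(n:ℕ) * b n)⁻¹ := by
      exact inv_anti₀ (mul_pos (pow_pos (by norm_num) n) (hbpos n)) hSbig
    have hMδ : (M n : ℝ) * (S n)⁻¹ ≤ b n := by
      have h1 : (M n : ℝ) * (S n)⁻¹ ≤ (M n : ℝ) * ((2:ℝ)^(n:ℕ) * b n)⁻¹ :=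
        mul_le_mul_of_nonneg_left hinv (le_of_lt (hMpos n))
      have h2 : (M n : ℝ) * ((2:ℝ)^(n:ℕ) * b n)⁻¹ = b n := by
        rw [mul_inv]
        have : (M n : ℝ) * (((2:ℝ)^(n:ℕ))⁻¹ * (b n)⁻¹)
            = ((M n : ℝ) * ((2:ℝ)^(n:ℕ))⁻¹) * (b n)⁻¹ := by ring
        rw [this]
        have h3 : (M n : ℝ) * ((2:ℝ)^(n:ℕ))⁻¹ = b n ^ 2 := by
          rw [hbsq n]
          congr 1
          rw [← zpow_natCast (2:ℝ) n, ← zpow_neg]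
        rw [h3, pow_two, mul_assoc, mul_inv_cancel₀ (hbpos n).ne', mul_one]
      linarith
    have hb2 : (M n : ℝ) * (2:ℝ)^(-(n:ℤ)) = b n ^ 2 := (hbsq n).symm
    have hexp : (2 * ((2:ℝ)^(n:ℕ) * (S n)⁻¹) + 3) * (C * (M n : ℝ) * (2:ℝ)^(-(n:ℤ)))
        = C * (2 * ((M n : ℝ) * (S n)⁻¹) * ((2:ℝ)^(n:ℕ) * (2:ℝ)^(-(n:ℤ))) + 3 * b n ^ 2) := by
      rw [← hb2]
      ring
    rw [hexp]
    have hone : (2:ℝ)^(n:ℕ) * (2:ℝ)^(-(n:ℤ)) = 1 := by rw [mul_comm]; exact hpowinv n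
    rw [hone, mul_one]
    have hbb : b n ^ 2 ≤ Btot * b n := by
      rw [pow_two]
      exact mul_le_mul_of_nonneg_right (hble n) (le_of_lt (hbpos n))
    have hCpos := hC
    have hb0 := le_of_lt (hbpos n)
    nlinarith [hMδ, hbb]
  -- assemble
  have hcover : (Λ ∩ Γ) ⊆ ⋃ n, B n := by
    intro z hz
    obtain ⟨n, hn1, hn2⟩ := annulus_exists hz.2.1
    exact Set.mem_iUnion.2 ⟨n, hz, hn1, hn2⟩
  have hchain : ∑' (lam : ↥(Λ ∩ Γ)), ENNReal.ofReal (1 - norm (lam : ℂ)) ≠ ⊤ := by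
    have h1 : ∑' (lam : ↥(Λ ∩ Γ)), ENNReal.ofReal (1 - norm (lam : ℂ))
        ≤ ∑' n, ∑' (x : ↥(B n)), ENNReal.ofReal (1 - norm (x:ℂ)) := by
      calc ∑' (lam : ↥(Λ ∩ Γ)), ENNReal.ofReal (1 - norm (lam : ℂ))
          ≤ ∑' (x : ↥(⋃ n, B n)), ENNReal.ofReal (1 - norm (x:ℂ)) :=
            ENNReal.tsum_mono_subtype (fun z => ENNReal.ofReal (1 - norm z)) hcover
        _ ≤ ∑' n, ∑' (x : ↥(B n)), ENNReal.ofReal (1 - norm (x:ℂ)) :=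
            ENNReal.tsum_iUnion_le_tsum (fun z => ENNReal.ofReal (1 - norm z)) B
    have h2 : ∑' n, ∑' (x : ↥(B n)), ENNReal.ofReal (1 - norm (x:ℂ))
        ≤ ∑' n, ENNReal.ofReal ((C * (2 + 3 * Btot)) * b n) := by
      apply ENNReal.tsum_le_tsum
      intro n
      exact le_trans (hBbound n) (ENNReal.ofReal_le_ofReal (hreal n))
    have h3 : ∑' n, ENNReal.ofReal ((C * (2 + 3 * Btot)) * b n) ≠ ⊤ := by
      rw [← ENNReal.ofReal_tsum_of_nonneg
        (fun n => mul_nonneg (mul_nonneg (le_of_lt hC) (by linarith)) (le_of_lt (hbpos n)))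
        (hsum.mul_left _)]
      exact ENNReal.ofReal_ne_top
    exact ne_top_of_le_ne_top h3 (le_trans h1 h2)
  exact hchain htop
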